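/- arXiv:math/9411236 — 2 statements merged into one kernel-verified Lean document; each statement's English description precedes it below -/
import Mathlib

section
/- No acyclic hypergraph is dense, i.e., every acyclic hypergraph H satisfies ‖H‖ > 2[H], where ‖H‖ is the number of vertices and [H] the number of hyperedges. -/
variable {V : Type*} [DecidableEq V] [Fintype V]

/-- The weight of a vertex set `X`: the number of hyperedges contained in `X`. -/
def hWeight (T : Finset (Finset V)) (X : Finset V) : ℕ :=
  (T.filter (· ⊆ X)).card

/-- A vertex set `X` is dense if `‖X‖ ≤ 2[X]`. -/
def HDense (T : Finset (Finset V)) (X : Finset V) : Prop :=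
  X.card ≤ 2 * hWeight T X

/-- A vertex set `X` is super-dense (immodest) if `‖X‖ < 2[X]`. -/
def HSuperDense (T : Finset (Finset V)) (X : Finset V) : Prop :=
  X.card < 2 * hWeight T X

/-- A hypergraph is `l`-meager if it has no (nonempty) dense vertex set of cardinality `≤ 2l`. -/
def HMeager (T : Finset (Finset V)) (l : ℕ) : Prop :=
  ∀ X : Finset V, X.Nonempty → X.card ≤ 2 * l → ¬ HDense T X

/-- A hypergraph is `l`-modest if it has no super-dense vertex set of cardinality `≤ 2l`. -/
def HModest (T : Finset (Finset V)) (l : ℕ) : Prop :=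
  ∀ X : Finset V, X.card ≤ 2 * l → ¬ HSuperDense T X

/-- Vertices `x` and `y` are adjacent if some hyperedge contains both. -/
def Adjacent (T : Finset (Finset V)) (x y : V) : Prop :=
  x ≠ y ∧ ∃ h ∈ T, x ∈ h ∧ y ∈ h

/-- A weak cycle: `k ≥ 3` distinct vertices (indices mod `k`, cyclic successor given
by `finRotate`), consecutive vertices adjacent, and either `k > 3` or (`k = 3` and)
the set of the three vertices is not a hyperedge. -/
def IsWeakCycle (T : Finset (Finset V)) {k : ℕ} (x : Fin k → V) : Prop :=
  3 ≤ k ∧ Function.Injective x ∧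
    (∀ i : Fin k, Adjacent T (x i) (x (finRotate k i))) ∧
    (3 < k ∨ Finset.univ.image x ∉ T)

/-- A cycle: either a cycle of length `k ≥ 3` (a weak cycle with no consecutive triple
forming a hyperedge), or a cycle of length `2` (two vertices lying in two distinct
hyperedges whose witnesses are distinct and different from the two vertices). -/
def IsCycle (T : Finset (Finset V)) {k : ℕ} (x : Fin k → V) : Prop :=
  (3 ≤ k ∧ IsWeakCycle T x ∧
    ∀ i : Fin k,
      ({x i, x (finRotate k i), x (finRotate k (finRotate k i))} : Finset V) ∉ T)
  ∨ (k = 2 ∧ Function.Injective x ∧ ∃ y₁ y₂ : V, y₁ ≠ y₂ ∧ (∀ i, y₁ ≠ x i) ∧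
      (∀ i, y₂ ≠ x i) ∧ insert y₁ (Finset.univ.image x) ∈ T ∧
      insert y₂ (Finset.univ.image x) ∈ T)

/-- A hypergraph is acyclic if it has no cycles (of any length). -/
def Acyclic (T : Finset (Finset V)) : Prop :=
  ∀ (k : ℕ) (x : Fin k → V), ¬ IsCycle T x

/-! Two hyperedges of an acyclic hypergraph share at most one vertex, since two hyperedges
through the same pair form a cycle of length 2. Using this, a cycle in the bipartite
vertex–hyperedge incidence graph, read as an alternating sequence of vertices and hyperedges,
yields a cycle of the hypergraph. Hence the incidence graph is a forest on `‖H‖ + [H]` vertices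
with `3[H]` edges, and `3[H] < ‖H‖ + [H]`. -/

open Finset SimpleGraph

variable {α : Type*}

lemma finRotate_apply_ne_self {n : ℕ} (hn : 2 ≤ n) (i : Fin n) : finRotate n i ≠ i := by
  obtain ⟨m, rfl⟩ := Nat.exists_eq_add_of_le' hn
  simp [finRotate_apply]

lemma image_univ_fin_three [DecidableEq α] (x : Fin 3 → α) :
    univ.image x = {x 0, x 1, x 2} := by
  ext; simp [Fin.exists_fin_succ, eq_comm]

lemma exists_eq_insert_of_card_eq_three [DecidableEq α] {h : Finset α} (hh : #h = 3)
    {a b : α} (ha : a ∈ h) (hb : b ∈ h) (hab : a ≠ b) :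
    ∃ y ∉ ({a, b} : Finset α), h = insert y {a, b} := by
  have hsub : {a, b} ⊆ h := insert_subset ha (singleton_subset_iff.2 hb)
  obtain ⟨y, hy⟩ : ∃ y, h \ {a, b} = {y} := by
    rw [← card_eq_one, card_sdiff_of_subset hsub, hh, card_pair hab]
  refine ⟨y, (mem_sdiff.1 (hy ▸ mem_singleton_self y)).2, ?_⟩
  rw [← sdiff_union_of_subset hsub, hy, singleton_union]

lemma SimpleGraph.IsAcyclic.card_edgeFinset_lt {W : Type*} [Fintype W] [Nonempty W]
    {G : SimpleGraph W} [Fintype G.edgeSet] (hG : G.IsAcyclic) :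
    #G.edgeFinset < Fintype.card W := by
  classical
  obtain ⟨F, hGF, hF⟩ := exists_maximal_isAcyclic_of_le_isAcyclic le_top hG
  have hFtree : F.IsTree := (connected_top.maximal_le_isAcyclic_iff_isTree le_top).1 hF
  calc #G.edgeFinset ≤ #F.edgeFinset := card_le_card (edgeFinset_mono hGF)
    _ < Fintype.card W := by rw [← hFtree.card_edgeFinset]; exact Nat.lt_succ_self _

lemma Acyclic.eq_of_mem_of_mem [DecidableEq α] {T : Finset (Finset α)}
    (hT : ∀ h ∈ T, #h = 3) (hac : Acyclic T) {e f : Finset α} (he : e ∈ T) (hf : f ∈ T)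
    {a b : α} (hab : a ≠ b) (hae : a ∈ e) (hbe : b ∈ e) (haf : a ∈ f) (hbf : b ∈ f) :
    e = f := by
  by_contra hef
  obtain ⟨y₁, hy₁, rfl⟩ := exists_eq_insert_of_card_eq_three (hT e he) hae hbe hab
  obtain ⟨y₂, hy₂, rfl⟩ := exists_eq_insert_of_card_eq_three (hT f hf) haf hbf hab
  have himage : univ.image ![a, b] = {a, b} := by
    ext; simp [Fin.exists_fin_two, eq_comm]
  refine hac 2 ![a, b] (Or.inr ⟨rfl, ?_, y₁, y₂, ?_, ?_, ?_, ?_, ?_⟩)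
  · intro i j
    fin_cases i <;> fin_cases j <;> simp [hab, hab.symm]
  · rintro rfl; exact hef rfl
  · intro i; fin_cases i <;> simp_all
  · intro i; fin_cases i <;> simp_all
  · rwa [himage]
  · rwa [himage]

structure IsBergeCycle (T : Finset (Finset α)) {n : ℕ} (x : Fin n → α) (E : Fin n → Finset α) :
    Prop where
  two_le : 2 ≤ n
  injective_vertex : Function.Injective x
  injective_edge : Function.Injective E
  edge_mem : ∀ i, E i ∈ T
  vertex_mem : ∀ i, x i ∈ E i
  next_vertex_mem : ∀ i, x (finRotate n i) ∈ E i

lemma Acyclic.not_isBergeCycle [DecidableEq α] {T : Finset (Finset α)}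
    (hT : ∀ h ∈ T, #h = 3) (hac : Acyclic T) {n : ℕ} {x : Fin n → α} {E : Fin n → Finset α} :
    ¬ IsBergeCycle T x E := by
  intro ⟨hn, hx, hE, hET, hxE, hx'E⟩
  have hne : ∀ i, x i ≠ x (finRotate n i) := fun i h =>
    finRotate_apply_ne_self hn i (hx h).symm
  rcases hn.eq_or_lt with rfl | hn
  · exact hE.ne (by decide) (hac.eq_of_mem_of_mem hT (hET 0) (hET 1) (hne 0) (hxE 0) (hx'E 0)
      (hx'E 1) (hxE 1))
  have htriple : ∀ i,
      ({x i, x (finRotate n i), x (finRotate n (finRotate n i))} : Finset α) ∉ T := by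
    intro i hf
    -- the triple would coincide with both `E i` and `E (i + 1)`
    have h₁ := hac.eq_of_mem_of_mem hT hf (hET i) (hne i) (by simp) (by simp) (hxE i) (hx'E i)
    have h₂ := hac.eq_of_mem_of_mem hT hf (hET _) (hne _) (by simp) (by simp)
      (hxE (finRotate n i)) (hx'E (finRotate n i))
    exact finRotate_apply_ne_self hn.le i (hE (h₂.symm.trans h₁))
  refine hac n x (Or.inl ⟨hn, ⟨hn, hx, fun i => ⟨hne i, E i, hET i, hxE i, hx'E i⟩, ?_⟩, htriple⟩)
  rcases Nat.lt_or_eq_of_le hn with hn | rfl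
  · exact Or.inl hn
  · right
    simpa [image_univ_fin_three] using htriple 0

def incidenceGraph (T : Finset (Finset α)) : SimpleGraph (α ⊕ T) where
  Adj
    | .inl a, .inr e => a ∈ (e : Finset α)
    | .inr e, .inl a => a ∈ (e : Finset α)
    | _, _ => False
  symm := ⟨by rintro (_ | _) (_ | _) <;> simp⟩
  loopless := ⟨by rintro (_ | _) <;> simp⟩

namespace incidenceGraph

variable {T : Finset (Finset α)}

@[simp] lemma adj_inl_inr {a : α} {e : T} :
    (incidenceGraph T).Adj (.inl a) (.inr e) ↔ a ∈ (e : Finset α) := Iff.rfl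

@[simp] lemma adj_inr_inl {a : α} {e : T} :
    (incidenceGraph T).Adj (.inr e) (.inl a) ↔ a ∈ (e : Finset α) := Iff.rfl

@[simp] lemma not_adj_inl_inl {a b : α} : ¬ (incidenceGraph T).Adj (.inl a) (.inl b) := id

@[simp] lemma not_adj_inr_inr {e f : T} : ¬ (incidenceGraph T).Adj (.inr e) (.inr f) := id

instance [DecidableEq α] : DecidableRel (incidenceGraph T).Adj
  | .inl _, .inr _ => decidable_of_iff _ adj_inl_inr.symm
  | .inr _, .inl _ => decidable_of_iff _ adj_inr_inl.symm
  | .inl _, .inl _ => isFalse not_adj_inl_inl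
  | .inr _, .inr _ => isFalse not_adj_inr_inr

lemma isBipartiteWith [Fintype α] : (incidenceGraph T).IsBipartiteWith
    (univ.map .inl : Finset (α ⊕ T)) (univ.map .inr : Finset (α ⊕ T)) where
  disjoint := by simp [Set.disjoint_left]
  mem_of_adj u v h := by rcases u with _ | _ <;> rcases v with _ | _ <;> simp_all

lemma neighborFinset_inr [Fintype α] [DecidableEq α] (e : T) :
    (incidenceGraph T).neighborFinset (.inr e) = (e : Finset α).map .inl := by
  ext (_ | _) <;> simp

lemma degree_inr [Fintype α] [DecidableEq α] (e : T) :
    (incidenceGraph T).degree (.inr e) = #(e : Finset α) := by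
  rw [← card_neighborFinset_eq_degree, neighborFinset_inr, card_map]

lemma card_edgeFinset [Fintype α] [DecidableEq α] :
    #(incidenceGraph T).edgeFinset = ∑ e ∈ T, #e := by
  rw [← isBipartiteWith_sum_degrees_eq_card_edges' isBipartiteWith, sum_map]
  exact (sum_congr rfl fun e _ => degree_inr e).trans (sum_coe_sort T card)

lemma isLeft_ne_of_adj {u v : α ⊕ T} (h : (incidenceGraph T).Adj u v) : u.isLeft ≠ v.isLeft := by
  rcases u with _ | _ <;> rcases v with _ | _ <;> simp_all

lemma isLeft_getVert_iff {a : α} {w : α ⊕ T} (p : (incidenceGraph T).Walk (.inl a) w) {i : ℕ}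
    (hi : i ≤ p.length) : (p.getVert i).isLeft ↔ Even i := by
  induction i with
  | zero => simp
  | succ i ih =>
    have hne := isLeft_ne_of_adj (p.adj_getVert_succ (by omega : i < p.length))
    rw [Nat.even_add_one, ← ih (by omega)]
    revert hne
    cases (p.getVert i).isLeft <;> cases (p.getVert (i + 1)).isLeft <;> simp

end incidenceGraph

open incidenceGraph in
lemma Acyclic.not_isCycle_incidenceGraph [DecidableEq α] {T : Finset (Finset α)}
    (hT : ∀ h ∈ T, #h = 3) (hac : Acyclic T) {a : α}
    (c : (incidenceGraph T).Walk (.inl a) (.inl a)) : ¬ c.IsCycle := by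
  intro hc
  have hlen := hc.three_le_length
  obtain ⟨n, hn⟩ : Even c.length := (isLeft_getVert_iff c le_rfl).1 (by simp)
  have hx : ∀ i : Fin n, ∃ b, c.getVert (2 * i) = .inl b := fun i =>
    Sum.isLeft_iff.1 ((isLeft_getVert_iff c (by omega)).2 (even_two_mul _))
  have hE : ∀ i : Fin n, ∃ e, c.getVert (2 * i + 1) = .inr e := fun i =>
    Sum.isRight_iff.1 (by
      simpa [Nat.not_even_iff_odd] using (isLeft_getVert_iff c (i := 2 * i + 1) (by omega)).not)
  choose x hx using hx
  choose E hE using hE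
  have hnext : ∀ i : Fin n, c.getVert (2 * i + 2) = .inl (x (finRotate n i)) := by
    obtain ⟨m, rfl⟩ : ∃ m, n = m + 1 := ⟨n - 1, by omega⟩
    intro i
    rw [← hx, coe_finRotate]
    split_ifs with hi
    · subst hi
      rw [Fin.val_last, show 2 * m + 2 = c.length by omega, c.getVert_length, mul_zero,
        c.getVert_zero]
    · rfl
  have hgetVert_inj : ∀ i j, i ≤ c.length - 1 → j ≤ c.length - 1 →
      c.getVert i = c.getVert j → i = j :=
    fun i j hi hj h => hc.getVert_injOn' hi hj h
  refine hac.not_isBergeCycle hT (x := x) (E := fun i => E i)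
    ⟨by omega, fun i j h => ?_, fun i j h => ?_, fun i => (E i).2, fun i => ?_, fun i => ?_⟩
  · have := hgetVert_inj _ _ (by omega) (by omega) ((hx i).trans (h ▸ (hx j).symm))
    exact Fin.ext (by omega)
  · have := hgetVert_inj _ _ (by omega) (by omega) ((hE i).trans (Subtype.ext h ▸ (hE j).symm))
    exact Fin.ext (by omega)
  · simpa [hx, hE] using c.adj_getVert_succ (i := 2 * i) (by omega)
  · simpa [hE, hnext] using c.adj_getVert_succ (i := 2 * i + 1) (by omega)

lemma Acyclic.isAcyclic_incidenceGraph [DecidableEq α] {T : Finset (Finset α)}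
    (hT : ∀ h ∈ T, #h = 3) (hac : Acyclic T) : (incidenceGraph T).IsAcyclic := by
  intro u c hc
  obtain ⟨a, ha⟩ : ∃ a, .inl a ∈ c.support := by
    rcases u with a | _
    · exact ⟨a, c.start_mem_support⟩
    · have hadj := c.adj_getVert_succ (i := 0) (by have := hc.three_le_length; omega)
      rcases h₁ : c.getVert (0 + 1) with a | f
      · exact ⟨a, h₁ ▸ c.getVert_mem_support _⟩
      · simp [h₁] at hadj
  exact hac.not_isCycle_incidenceGraph hT (c.rotate _ ha) (hc.rotate ha)

/-- No acyclic hypergraph is dense: every acyclic hypergraph satisfies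
`‖H‖ > 2[H]`, where `‖H‖` is the number of vertices and `[H]` the number of
hyperedges. -/
theorem stmt5 [Nonempty V] (T : Finset (Finset V)) (hT : ∀ h ∈ T, h.card = 3)
    (hacyclic : Acyclic T) :
    2 * T.card < Fintype.card V := by
  have hedges : #(incidenceGraph T).edgeFinset = 3 * #T := by
    rw [incidenceGraph.card_edgeFinset, sum_congr rfl hT, sum_const, smul_eq_mul, mul_comm]
  have hforest := (hacyclic.isAcyclic_incidenceGraph hT).card_edgeFinset_lt
  rw [hedges, Fintype.card_sum, Fintype.card_coe] at hforest
  omega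
end

section
/- In an l-meager hypergraph, if X is a vertex set of cardinality k ≤ l, then the closure of X has cardinality < 2k. -/
variable {V : Type*} [DecidableEq V] [Fintype V]

/-- `X` attracts `y` if there are distinct `x₁, x₂ ∈ X` with `{x₁, x₂, y}` a
hyperedge. -/
def Attracts (T : Finset (Finset V)) (X : Finset V) (y : V) : Prop :=
  ∃ x₁ ∈ X, ∃ x₂ ∈ X, x₁ ≠ x₂ ∧ ({x₁, x₂, y} : Finset V) ∈ T

/-- `X` is closed if it contains every vertex it attracts. -/
def IsClosedSet (T : Finset (Finset V)) (X : Finset V) : Prop :=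
  ∀ y : V, Attracts T X y → y ∈ X

/-- `C` is the closure of `X`: the least closed set containing `X`. -/
def IsClosureOf (T : Finset (Finset V)) (X C : Finset V) : Prop :=
  X ⊆ C ∧ IsClosedSet T C ∧ ∀ D : Finset V, X ⊆ D → IsClosedSet T D → C ⊆ D

lemma hWeight_mono (T : Finset (Finset V)) {Y Z : Finset V} (h : Y ⊆ Z) :
    hWeight T Y ≤ hWeight T Z := by
  apply Finset.card_le_card
  intro e he
  simp only [Finset.mem_filter] at he ⊢
  exact ⟨he.1, he.2.trans h⟩

lemma hWeight_insert_lt (T : Finset (Finset V)) {Y : Finset V} {y : V}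
    (hy : y ∉ Y) (ha : Attracts T Y y) :
    hWeight T Y < hWeight T (insert y Y) := by
  obtain ⟨x₁, hx₁, x₂, hx₂, hne, hedge⟩ := ha
  apply Finset.card_lt_card
  constructor
  · intro e he
    simp only [Finset.mem_filter] at he ⊢
    exact ⟨he.1, he.2.trans (Finset.subset_insert _ _)⟩
  · intro hsub
    have hmem : ({x₁, x₂, y} : Finset V) ∈ T.filter (· ⊆ insert y Y) := by
      simp only [Finset.mem_filter]
      refine ⟨hedge, ?_⟩
      intro z hz
      simp only [Finset.mem_insert, Finset.mem_singleton] at hz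
      rcases hz with rfl | rfl | rfl
      · exact Finset.mem_insert_of_mem hx₁
      · exact Finset.mem_insert_of_mem hx₂
      · exact Finset.mem_insert_self _ _
    have := hsub hmem
    simp only [Finset.mem_filter] at this
    exact hy (this.2 (by simp))

lemma stmt10_aux (T : Finset (Finset V)) (l k : ℕ) (hmeager : HMeager T l)
    (X : Finset V) (hXne : X.Nonempty) (hkl : k ≤ l) :
    ∀ m : ℕ, ∀ Y : Finset V, 2 * k - Y.card ≤ m → X ⊆ Y →
      Y.card ≤ k + hWeight T Y → Y.card ≤ 2 * l →
      ∃ Z : Finset V, X ⊆ Z ∧ IsClosedSet T Z ∧ Z.card < 2 * k := by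
  intro m
  induction m with
  | zero =>
    intro Y hm hXY hgood h2l
    have hYne : Y.Nonempty := ⟨hXne.choose, hXY hXne.choose_spec⟩
    have hnd := hmeager Y hYne h2l
    unfold HDense at hnd
    omega
  | succ n ih =>
    intro Y hm hXY hgood h2l
    have hYne : Y.Nonempty := ⟨hXne.choose, hXY hXne.choose_spec⟩
    have hnd := hmeager Y hYne h2l
    unfold HDense at hnd
    push_neg at hnd
    have hcard : Y.card + 1 ≤ 2 * k := by omega
    by_cases hcl : IsClosedSet T Y
    · exact ⟨Y, hXY, hcl, by omega⟩
    · unfold IsClosedSet at hcl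
      push_neg at hcl
      obtain ⟨y, hy, hyY⟩ := hcl
      have hw := hWeight_insert_lt T hyY hy
      have hci : (insert y Y).card = Y.card + 1 := Finset.card_insert_of_notMem hyY
      exact ih (insert y Y) (by omega) (hXY.trans (Finset.subset_insert _ _))
        (by omega) (by omega)

/-- In an `l`-meager hypergraph, if `X` is a (nonempty) vertex set of cardinality
`k ≤ l`, then the closure of `X` has cardinality `< 2k`. -/
theorem stmt10 (T : Finset (Finset V)) (hT : ∀ h ∈ T, h.card = 3) (l k : ℕ)
    (hmeager : HMeager T l) (X C : Finset V) (hXne : X.Nonempty)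
    (hXk : X.card = k) (hkl : k ≤ l) (hC : IsClosureOf T X C) :
    C.card < 2 * k := by
  obtain ⟨Z, hXZ, hZcl, hZcard⟩ :=
    stmt10_aux T l k hmeager X hXne hkl (2 * k) X (by omega) (Finset.Subset.refl X)
      (by omega) (by omega)
  have := Finset.card_le_card (hC.2.2 Z hXZ hZcl)
  omega
end
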